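/- For every integer n ≥ 2 and every real number p, Σ_{A ⊆ {1,…,n−1}, n ∉ ⟨A⟩} p^{|A|}(1−p)^{n−1−|A|} = (1−p)^{⌊n/2⌋} · Σ_{i ≥ 0} h_{n,i} p^{i}, where the sum on the left runs over all subsets A of {1,…,n−1} such that n is not in the submonoid generated by A (the sum on the right has only finitely many nonzero terms). In particular, for p ∈ [0,1], the probability a_n(p) that n does not lie in the semigroup generated by a random subset of {1,…,n−1} (each element included independently with probability p) equals (1−p)^{⌊n/2⌋} h_n(p), where h_n(p) = Σ_i h_{n,i} p^i. -/

import Mathlib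

open Filter Topology
open scoped Classical BigOperators

/-- The set of gaps of a numerical semigroup `S ⊆ ℕ`. -/
def gapSet (S : AddSubmonoid ℕ) : Set ℕ := {n : ℕ | n ∉ S}

/-- `S` is cofinite if its set of gaps is finite. -/
def IsCofinite (S : AddSubmonoid ℕ) : Prop := (gapSet S).Finite

/-- The minimal generators of `S`: nonzero elements of `S` that are not the
sum of two nonzero elements of `S`. -/
def minGens (S : AddSubmonoid ℕ) : Set ℕ :=
  {s : ℕ | s ∈ S ∧ s ≠ 0 ∧ ¬ ∃ a ∈ S, ∃ b ∈ S, a ≠ 0 ∧ b ≠ 0 ∧ s = a + b}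

/-- The embedding dimension `e(S)`: the number of minimal generators of `S`. -/
noncomputable def embDim (S : AddSubmonoid ℕ) : ℕ := (minGens S).ncard

/-- The genus `g(S)`: the number of gaps of `S` (junk value `0` if `S` is not cofinite). -/
noncomputable def genus (S : AddSubmonoid ℕ) : ℕ := (gapSet S).ncard

/-- The Frobenius number `F(S)`: the largest gap of `S`
(junk value `0` if `S` is not cofinite or `S = ℕ`). -/
noncomputable def frob (S : AddSubmonoid ℕ) : ℕ := sSup (gapSet S)

/-- A cofinite numerical semigroup `S ≠ ℕ` is irreducible if it is maximal with
respect to inclusion among numerical semigroups with Frobenius number `F(S)`. -/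
def IsIrred (S : AddSubmonoid ℕ) : Prop :=
  IsCofinite S ∧ S ≠ ⊤ ∧
    ∀ T : AddSubmonoid ℕ, S ≤ T → frob T = frob S → T = S

/-- The number of gaps of `S` that are at most `M`. -/
noncomputable def gapsUpTo (S : AddSubmonoid ℕ) (M : ℕ) : ℕ :=
  {x : ℕ | x ∉ S ∧ x ≤ M}.ncard

/-- The probability weight of a generating set `B ⊆ {1, …, M}` in the ER-type
model `S(M, p)`. -/
noncomputable def wt (p : ℝ) (M : ℕ) (B : Finset ℕ) : ℝ :=
  p ^ B.card * (1 - p) ^ (M - B.card)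

/-- The probability in the ER-type model `S(M, p)` that the random numerical
semigroup `𝒮 = ⟨𝒜⟩` lies in the event `E`. -/
noncomputable def probEvent (M : ℕ) (p : ℝ) (E : Set (AddSubmonoid ℕ)) : ℝ :=
  ∑ B ∈ (Finset.Icc 1 M).powerset,
    if AddSubmonoid.closure (B : Set ℕ) ∈ E then wt p M B else 0

/-- The expectation in the ER-type model `S(M, p)` of an invariant `X` of the
random numerical semigroup `𝒮 = ⟨𝒜⟩`. -/
noncomputable def expectVal (M : ℕ) (p : ℝ) (X : AddSubmonoid ℕ → ℕ) : ℝ :=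
  ∑ B ∈ (Finset.Icc 1 M).powerset,
    (X (AddSubmonoid.closure (B : Set ℕ)) : ℝ) * wt p M B

/-- `h_{n,i}`: the number of numerical semigroups `T` with `n ∉ T`, embedding
dimension `i`, and all minimal generators strictly less than `n/2`. -/
noncomputable def hvec (n i : ℕ) : ℕ :=
  {T : AddSubmonoid ℕ | n ∉ T ∧ embDim T = i ∧ ∀ a ∈ minGens T, 2 * a < n}.ncard

/-- `a_n(p)`: the probability that `n` is not in the semigroup generated by a
random subset of `{1, …, n-1}` chosen with inclusion probability `p`. -/
noncomputable def anp (n : ℕ) (p : ℝ) : ℝ :=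
  ∑ A ∈ (Finset.Icc 1 (n - 1)).powerset,
    if n ∉ AddSubmonoid.closure (A : Set ℕ) then
      p ^ A.card * (1 - p) ^ (n - 1 - A.card) else 0


/-!
Sort the sets `A` by the semigroup `T = ⟨a ∈ A : 2a < n⟩` generated by their lower halves.
When `n ∉ T`, one has `n ∉ ⟨A⟩` exactly when `A` contains the minimal generators of `T` and
otherwise consists of elements `a < n/2` of `T` and elements `a > n/2` with `n - a ∉ T`.
The map `a ↦ n - a` matches the latter with the gaps of `T` below `n/2`, so there are
`⌊(n-1)/2⌋` such admissible elements, and the fibre of `T` has total weight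
`p^e(T) (1-p)^⌊n/2⌋`. The semigroups `T` that occur are exactly those counted by the `h_{n,i}`.
-/

open Finset

theorem minGens_closure_subset (s : Set ℕ) : minGens (AddSubmonoid.closure s) ⊆ s := by
  have decompose : ∀ y ∈ AddSubmonoid.closure s, y ∈ s ∨ y = 0 ∨
      ∃ a ∈ AddSubmonoid.closure s, ∃ b ∈ AddSubmonoid.closure s,
        a ≠ 0 ∧ b ≠ 0 ∧ y = a + b := by
    intro y hy
    induction hy using AddSubmonoid.closure_induction with
    | mem y hy => exact Or.inl hy
    | zero => exact Or.inr (Or.inl rfl)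
    | add a b ha hb iha ihb =>
      rcases eq_or_ne a 0 with rfl | ha0
      · simpa using ihb
      rcases eq_or_ne b 0 with rfl | hb0
      · simpa using iha
      exact Or.inr (Or.inr ⟨a, ha, b, hb, ha0, hb0, rfl⟩)
  rintro x ⟨hx, hx0, hirr⟩
  rcases decompose x hx with h | h | h
  exacts [h, absurd h hx0, absurd h hirr]

theorem closure_minGens (T : AddSubmonoid ℕ) : AddSubmonoid.closure (minGens T) = T := by
  refine le_antisymm (AddSubmonoid.closure_le.2 fun _ h => h.1) fun t ht => ?_
  induction t using Nat.strong_induction_on with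
  | _ t ih =>
    by_cases hmin : t ∈ minGens T
    · exact AddSubmonoid.subset_closure hmin
    rcases eq_or_ne t 0 with rfl | ht0
    · exact zero_mem _
    obtain ⟨a, ha, b, hb, ha0, hb0, rfl⟩ :
        ∃ a ∈ T, ∃ b ∈ T, a ≠ 0 ∧ b ≠ 0 ∧ t = a + b := by
      by_contra h
      exact hmin ⟨ht, ht0, h⟩
    exact add_mem (ih a (by omega) ha) (ih b (by omega) hb)

theorem notMem_closure_of_forall_mem_or_sub_notMem {T : AddSubmonoid ℕ} {n : ℕ} {s : Set ℕ}
    (hn : n ∉ T) (hs : ∀ a ∈ s, a ∈ T ∨ (n < 2 * a ∧ n - a ∉ T)) :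
    n ∉ AddSubmonoid.closure s := by
  have shift : ∀ {x y : ℕ}, x ∈ T → n - y ∉ T → x + y ≤ n → n - (x + y) ∉ T :=
    fun {x y} hx hy hxy h =>
      hy (by simpa [show n - (x + y) + x = n - y by omega] using add_mem h hx)
  -- Enlarging `T` by everything above `n` and by every `x > n / 2` with `n - x ∉ T` still gives a
  -- semigroup, and it still misses `n`.
  let M : AddSubmonoid ℕ :=
    { carrier := {x | x ∈ T ∨ n < x ∨ (n < 2 * x ∧ n - x ∉ T)}
      zero_mem' := Or.inl T.zero_mem
      add_mem' := by
        rintro x y hx hy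
        by_cases hxy : n < x + y
        · exact Or.inr (Or.inl hxy)
        rcases hx with hx | hx | ⟨hx, hx'⟩ <;> rcases hy with hy | hy | ⟨hy, hy'⟩
        · exact Or.inl (add_mem hx hy)
        all_goals first
          | omega
          | exact Or.inr (Or.inr ⟨by omega, shift hx hy' (by omega)⟩)
          | exact Or.inr (Or.inr ⟨by omega, add_comm x y ▸ shift hy hx' (by omega)⟩) }
  have hle : AddSubmonoid.closure s ≤ M :=
    AddSubmonoid.closure_le.2 fun a ha => (hs a ha).imp_right Or.inr
  intro h
  rcases hle h with h | h | ⟨_, h⟩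
  · exact hn h
  · omega
  · exact h (by simp)

theorem sum_pow_mul_Icc {α : Type*} [DecidableEq α] {G V : Finset α} (hGV : G ⊆ V) {M : ℕ}
    (hVM : #V ≤ M) (p : ℝ) :
    ∑ A ∈ Icc G V, p ^ #A * (1 - p) ^ (M - #A) = p ^ #G * (1 - p) ^ (M - #V) := by
  have hdisj : ∀ B ∈ (V \ G).powerset, Disjoint G B := fun B hB =>
    disjoint_sdiff.mono_right (mem_powerset.1 hB)
  rw [Icc_eq_image_powerset hGV, sum_image fun B₁ h₁ B₂ h₂ h => by
    rw [← union_sdiff_cancel_left (hdisj B₁ h₁),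
      ← union_sdiff_cancel_left (hdisj B₂ h₂)]
    exact congrArg (· \ G) h]
  calc ∑ B ∈ (V \ G).powerset, p ^ #(G ∪ B) * (1 - p) ^ (M - #(G ∪ B))
      = ∑ B ∈ (V \ G).powerset,
          p ^ #G * (1 - p) ^ (M - #V) * (p ^ #B * (1 - p) ^ (#(V \ G) - #B)) := by
        refine sum_congr rfl fun B hB => ?_
        have hBc : #B ≤ #(V \ G) := card_le_card (mem_powerset.1 hB)
        have hGc : #(V \ G) = #V - #G := card_sdiff_of_subset hGV
        have hG : #G ≤ #V := card_le_card hGV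
        rw [card_union_of_disjoint (hdisj B hB),
          show M - (#G + #B) = (M - #V) + (#(V \ G) - #B) by omega]
        ring
    _ = p ^ #G * (1 - p) ^ (M - #V) := by
        rw [← mul_sum, sum_pow_mul_eq_add_pow, add_sub_cancel, one_pow, mul_one]

noncomputable def closureBelowHalf (n : ℕ) (A : Finset ℕ) : AddSubmonoid ℕ :=
  AddSubmonoid.closure {a | a ∈ A ∧ 2 * a < n}

/-- The elements `a < n` that may join the generators of `T` without putting `n` into the generated
semigroup. -/
noncomputable def admissible (n : ℕ) (T : AddSubmonoid ℕ) : Finset ℕ :=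
  {a ∈ Icc 1 (n - 1) | (2 * a < n ∧ a ∈ T) ∨ (n < 2 * a ∧ n - a ∉ T)}

noncomputable def minGensBelow (n : ℕ) (T : AddSubmonoid ℕ) : Finset ℕ :=
  {a ∈ range n | a ∈ minGens T}

theorem coe_minGensBelow {n : ℕ} {T : AddSubmonoid ℕ} (hT : ∀ a ∈ minGens T, a < n) :
    (minGensBelow n T : Set ℕ) = minGens T := by
  ext a
  simpa [minGensBelow] using hT a

theorem minGensBelow_subset_admissible {n : ℕ} {T : AddSubmonoid ℕ}
    (hT : ∀ a ∈ minGens T, 2 * a < n) : minGensBelow n T ⊆ admissible n T := fun a ha => by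
  have hmin := (mem_filter.1 ha).2
  have hlt := hT a hmin
  have ha0 := hmin.2.1
  exact mem_filter.2 ⟨mem_Icc.2 ⟨by omega, by omega⟩, Or.inl ⟨hlt, hmin.1⟩⟩

/-- `a ↦ n - a` swaps the admissible elements above `n / 2` with the gaps of `T` below `n / 2`. -/
theorem card_admissible (n : ℕ) (T : AddSubmonoid ℕ) : #(admissible n T) = (n - 1) / 2 := by
  rw [show (n - 1) / 2 = #(Icc 1 ((n - 1) / 2)) by simp]
  refine card_nbij' (fun a => if 2 * a < n then a else n - a)
    (fun b => if b ∈ T then b else n - b)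
    ?_ ?_ ?_ ?_ <;> intro a ha <;>
    simp only [admissible, coe_filter, coe_Icc, Set.mem_ofPred_eq, Set.mem_Icc, mem_Icc] at ha ⊢
  · rcases ha with ⟨⟨h1, h2⟩, ⟨h3, -⟩ | ⟨h3, -⟩⟩ <;> split_ifs <;> omega
  · by_cases haT : a ∈ T
    · simp only [if_pos haT]
      exact ⟨by omega, Or.inl ⟨by omega, haT⟩⟩
    · simp only [if_neg haT, show n - (n - a) = a by omega]
      exact ⟨by omega, Or.inr ⟨by omega, haT⟩⟩
  · rcases ha with ⟨⟨-, h2⟩, ⟨h3, h4⟩ | ⟨h3, h4⟩⟩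
    · simp [h3, h4]
    · simp [show ¬ 2 * a < n by omega, h4, show n - (n - a) = a by omega]
  · by_cases haT : a ∈ T
    · simp [haT, show 2 * a < n by omega]
    · simp [haT, show ¬ 2 * (n - a) < n by omega]
      omega

theorem mem_image_closureBelowHalf_iff {n : ℕ} {T : AddSubmonoid ℕ} :
    T ∈ (Icc 1 (n - 1)).powerset.image (closureBelowHalf n) ↔
      ∀ a ∈ minGens T, 2 * a < n := by
  constructor
  · intro hT
    obtain ⟨A, -, rfl⟩ := mem_image.1 hT
    exact fun a ha => (minGens_closure_subset _ ha).2
  · intro hT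
    refine mem_image.2 ⟨minGensBelow n T,
      mem_powerset.2 ((minGensBelow_subset_admissible hT).trans (filter_subset _ _)), ?_⟩
    refine (congrArg AddSubmonoid.closure ?_).trans (closure_minGens T)
    ext a
    simp only [minGensBelow, mem_filter, mem_range, Set.mem_ofPred_eq]
    exact ⟨fun h => h.1.2, fun h => ⟨⟨by have := hT a h; omega, h⟩, hT a h⟩⟩

noncomputable def semigroupsBelowHalf (n : ℕ) : Finset (AddSubmonoid ℕ) :=
  {T ∈ (Icc 1 (n - 1)).powerset.image (closureBelowHalf n) | n ∉ T}

theorem hvec_eq_card (n i : ℕ) : hvec n i = #{T ∈ semigroupsBelowHalf n | embDim T = i} := by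
  rw [hvec, ← Set.ncard_coe_finset]
  congr 1
  ext T
  simp only [semigroupsBelowHalf, coe_filter, mem_filter, mem_image_closureBelowHalf_iff,
    Set.mem_ofPred_eq]
  tauto

theorem tsum_hvec_mul_pow (n : ℕ) (p : ℝ) :
    ∑' i : ℕ, (hvec n i : ℝ) * p ^ i = ∑ T ∈ semigroupsBelowHalf n, p ^ embDim T := by
  rw [sum_comp (fun i => p ^ i) embDim, tsum_eq_sum (s := (semigroupsBelowHalf n).image embDim)]
  · exact sum_congr rfl fun i _ => by rw [hvec_eq_card, nsmul_eq_mul]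
  · intro i hi
    have hempty : {T ∈ semigroupsBelowHalf n | embDim T = i} = ∅ :=
      filter_eq_empty_iff.2 fun T hT h => hi (mem_image.2 ⟨T, hT, h⟩)
    rw [hvec_eq_card, hempty, card_empty, Nat.cast_zero, zero_mul]

theorem filter_closureBelowHalf_eq_Icc {n : ℕ} {T : AddSubmonoid ℕ}
    (hT : ∀ a ∈ minGens T, 2 * a < n) (hnT : n ∉ T) :
    {A ∈ (Icc 1 (n - 1)).powerset |
        closureBelowHalf n A = T ∧ n ∉ AddSubmonoid.closure (A : Set ℕ)}
      = Icc (minGensBelow n T) (admissible n T) := by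
  ext A
  simp only [mem_filter, mem_powerset, Finset.mem_Icc]
  constructor
  · rintro ⟨hA, rfl, hnA⟩
    refine ⟨fun a ha => (minGens_closure_subset _ (mem_filter.1 ha).2).1, fun a ha => ?_⟩
    have haA : a ∈ AddSubmonoid.closure (A : Set ℕ) := AddSubmonoid.subset_closure ha
    refine mem_filter.2 ⟨hA ha, ?_⟩
    rcases lt_trichotomy (2 * a) n with h | h | h
    · exact Or.inl ⟨h, AddSubmonoid.subset_closure ⟨ha, h⟩⟩
    · exact absurd (by rw [← h, two_mul]; exact add_mem haA haA) hnA
    · refine Or.inr ⟨h, fun hna => hnA ?_⟩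
      have := mem_Icc.1 (hA ha)
      have := add_mem haA (AddSubmonoid.closure_mono (fun x hx => hx.1) hna)
      rwa [show a + (n - a) = n by omega] at this
  · rintro ⟨hGA, hAV⟩
    have hlow : ∀ a ∈ A, 2 * a < n → a ∈ T := fun a ha h2 => by
      rcases (mem_filter.1 (hAV ha)).2 with ⟨-, h⟩ | ⟨h, -⟩
      exacts [h, by omega]
    refine ⟨hAV.trans (filter_subset _ _), le_antisymm ?_ ?_,
      notMem_closure_of_forall_mem_or_sub_notMem hnT fun a ha =>
        (mem_filter.1 (hAV ha)).2.imp And.right id⟩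
    · exact AddSubmonoid.closure_le.2 fun a ha => hlow a ha.1 ha.2
    · conv_lhs => rw [← closure_minGens T]
      refine AddSubmonoid.closure_mono fun a ha => ⟨hGA (mem_filter.2 ⟨?_, ha⟩), hT a ha⟩
      have := hT a ha
      exact mem_range.2 (by omega)

theorem sum_fiber_closureBelowHalf {n : ℕ} {T : AddSubmonoid ℕ}
    (hT : ∀ a ∈ minGens T, 2 * a < n) (p : ℝ) :
    ∑ A ∈ (Icc 1 (n - 1)).powerset with closureBelowHalf n A = T,
        (if n ∉ AddSubmonoid.closure (A : Set ℕ) then p ^ #A * (1 - p) ^ (n - 1 - #A) else 0)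
      = if n ∉ T then p ^ embDim T * (1 - p) ^ (n / 2) else 0 := by
  by_cases hnT : n ∈ T
  · rw [if_neg (not_not.2 hnT)]
    refine sum_eq_zero fun A hA => if_neg (not_not.2 ?_)
    rw [← (mem_filter.1 hA).2] at hnT
    exact AddSubmonoid.closure_mono (fun a ha => ha.1) hnT
  · have hcard : #(admissible n T) ≤ n - 1 := by rw [card_admissible]; omega
    rw [if_pos hnT, ← sum_filter, filter_filter, filter_closureBelowHalf_eq_Icc hT hnT,
      sum_pow_mul_Icc (minGensBelow_subset_admissible hT) hcard, card_admissible, embDim,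
      ← coe_minGensBelow (n := n) fun a ha => by have := hT a ha; omega, Set.ncard_coe_finset,
      show n - 1 - (n - 1) / 2 = n / 2 by omega]

theorem statement10_general (n : ℕ) (p : ℝ) :
    (∑ A ∈ (Finset.Icc 1 (n - 1)).powerset,
        if n ∉ AddSubmonoid.closure (A : Set ℕ) then
          p ^ A.card * (1 - p) ^ (n - 1 - A.card) else 0)
      = (1 - p) ^ (n / 2) * ∑' i : ℕ, (hvec n i : ℝ) * p ^ i := by
  rw [tsum_hvec_mul_pow, mul_sum, semigroupsBelowHalf, sum_filter,
    ← sum_fiberwise_of_maps_to fun A hA => mem_image_of_mem (closureBelowHalf n) hA]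
  refine sum_congr rfl fun T hT => ?_
  rw [sum_fiber_closureBelowHalf (mem_image_closureBelowHalf_iff.1 hT)]
  split_ifs <;> ring

theorem statement10 (n : ℕ) (hn : 2 ≤ n) (p : ℝ) :
    (∑ A ∈ (Finset.Icc 1 (n - 1)).powerset,
        if n ∉ AddSubmonoid.closure (A : Set ℕ) then
          p ^ A.card * (1 - p) ^ (n - 1 - A.card) else 0)
      = (1 - p) ^ (n / 2) * ∑' i : ℕ, (hvec n i : ℝ) * p ^ i :=
  statement10_general n p
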